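/- At every point of the sub-manifold defined by γ_i − β_{p+1−i} = 0 for all i = 1, …, p, the gradient of the pseudospin expectation is tangent to that sub-manifold: if γ, β ∈ ℝ^p satisfy γ_i = β_{p+1−i} for every i, then for every i, (∂F/∂γ_i)(γ, β, θ) − (∂F/∂β_{p+1−i})(γ, β, θ) = 0. In particular, any critical point of the restriction of F to this sub-manifold is a critical point of F on ℝ^p × ℝ^p. -/

import Mathlib

open Matrix Complex Real

noncomputable section

def σx : Matrix (Fin 2) (Fin 2) ℂ := !![0, 1; 1, 0]

def σz : Matrix (Fin 2) (Fin 2) ℂ := !![1, 0; 0, -1]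

/-- The Bloch axis `n(θ) = cos θ · σz + sin θ · σx`. -/
def nvec (θ : ℝ) : Matrix (Fin 2) (Fin 2) ℂ :=
  (Real.cos θ : ℂ) • σz + (Real.sin θ : ℂ) • σx

/-- `U_B(β) = exp(−2iβ·σz)`. -/
def UB (β : ℝ) : Matrix (Fin 2) (Fin 2) ℂ :=
  NormedSpace.exp ((-2 * β * Complex.I) • σz)

/-- `U_C(γ,θ) = exp(−2iγ·n(θ))`. -/
def UC (γ θ : ℝ) : Matrix (Fin 2) (Fin 2) ℂ :=
  NormedSpace.exp ((-2 * γ * Complex.I) • nvec θ)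

/-- The level-`p` QAOA circuit `U(γ,β,θ) = U_B(β_p)·U_C(γ_p,θ)·⋯·U_B(β_1)·U_C(γ_1,θ)`. -/
def Uqaoa (p : ℕ) (γ β : Fin p → ℝ) (θ : ℝ) : Matrix (Fin 2) (Fin 2) ℂ :=
  ((List.ofFn fun i : Fin p => UB (β i) * UC (γ i) θ).reverse).prod

/-- The pseudospin expectation `F(γ,β,θ) = Re tr[n(θ)·U·σz·U†]`. -/
def Fps (p : ℕ) (γ β : Fin p → ℝ) (θ : ℝ) : ℝ :=
  (Matrix.trace (nvec θ * Uqaoa p γ β θ * σz * (Uqaoa p γ β θ)ᴴ)).re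

end

/-! The theorem comes from the symmetry `F(γ, β) = F(β ∘ rev, γ ∘ rev)`. Transposing the circuit
reverses the order of its layers, and conjugating by the reflection `R = n(θ/2)`, which swaps `σz`
and `n(θ)` and hence `U_B` and `U_C`, turns the result back into a circuit of the original shape
with `γ` and `β` exchanged and reversed: `Uᵀ = R V R`. As `σz`, `n(θ)` and `R` are real symmetric,
`tr(n U σz Uᴴ) = tr((n U σz Uᴴ)ᵀ)` then equals `tr(n V σz Vᴴ)`. On the sub-manifold `γ = β ∘ rev`
the symmetry identifies `t ↦ F(γ[i ↦ t], β)` with `t ↦ F(γ, β[rev i ↦ t])`. -/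

theorem List.ofFn_comp_rev {α : Type*} {n : ℕ} (f : Fin n → α) :
    List.ofFn (fun i => f i.rev) = (List.ofFn f).reverse := by
  rw [List.ofFn_eq_map, List.ofFn_eq_map, ← List.map_reverse, List.finRange_reverse, List.map_map]
  rfl

theorem mul_mul_mul_of_mul_self_eq_one {M : Type*} [Monoid M] {r : M} (hr : r * r = 1)
    (a b : M) : r * (a * b) * r = r * a * r * (r * b * r) := by
  calc r * (a * b) * r = r * a * 1 * b * r := by simp only [mul_one, mul_assoc]
    _ = r * a * r * (r * b * r) := by simp only [← hr, mul_assoc]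

theorem mul_list_prod_mul_of_mul_self_eq_one {M : Type*} [Monoid M] {r : M} (hr : r * r = 1)
    (l : List M) : r * l.prod * r = (l.map fun a => r * a * r).prod := by
  induction l with
  | nil => simpa using hr
  | cons a l ih => rw [List.prod_cons, List.map_cons, List.prod_cons, ← ih,
      mul_mul_mul_of_mul_self_eq_one hr]

theorem Matrix.mul_exp_mul_of_mul_self_eq_one {m 𝔸 : Type*} [Fintype m] [DecidableEq m]
    [NormedCommRing 𝔸] [NormedAlgebra ℚ 𝔸] [CompleteSpace 𝔸] {R : Matrix m m 𝔸}
    (hR : R * R = 1) (A : Matrix m m 𝔸) :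
    R * NormedSpace.exp A * R = NormedSpace.exp (R * A * R) := by
  simpa using (Matrix.exp_units_conj ⟨R, R, hR, hR⟩ A).symm

lemma nvec_eq (θ : ℝ) : nvec θ = !![(Real.cos θ : ℂ), Real.sin θ; Real.sin θ, -Real.cos θ] := by
  ext i j
  fin_cases i <;> fin_cases j <;> simp [nvec, σx, σz]

lemma nvec_zero : nvec 0 = σz := by
  simp [nvec]

lemma nvec_mul_self (a : ℝ) : nvec a * nvec a = 1 := by
  rw [nvec_eq]
  ext i j
  fin_cases i <;> fin_cases j <;> simp [Matrix.mul_apply, Fin.sum_univ_two, ← sq, mul_comm]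

lemma nvec_mul_nvec_mul_nvec (a b : ℝ) : nvec a * nvec b * nvec a = nvec (2 * a - b) := by
  simp only [nvec_eq, Real.cos_sub, Real.sin_sub, Real.cos_two_mul', Real.sin_two_mul]
  ext i j
  fin_cases i <;> fin_cases j <;> simp [Matrix.mul_apply, Fin.sum_univ_two] <;> ring

lemma transpose_nvec (θ : ℝ) : (nvec θ)ᵀ = nvec θ := by
  rw [nvec_eq]; ext i j; fin_cases i <;> fin_cases j <;> rfl

lemma conjTranspose_nvec (θ : ℝ) : (nvec θ)ᴴ = nvec θ := by
  rw [nvec_eq]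
  ext i j
  fin_cases i <;> fin_cases j <;>
    simp [-Complex.ofReal_cos, -Complex.ofReal_sin, Complex.conj_ofReal]

lemma transpose_σz : σzᵀ = σz := by
  rw [← nvec_zero, transpose_nvec]

lemma transpose_UB (β : ℝ) : (UB β)ᵀ = UB β := by
  rw [UB, ← Matrix.exp_transpose, transpose_smul, transpose_σz]

lemma transpose_UC (γ θ : ℝ) : (UC γ θ)ᵀ = UC γ θ := by
  rw [UC, ← Matrix.exp_transpose, transpose_smul, transpose_nvec]

lemma nvec_half_mul_σz_mul (θ : ℝ) : nvec (θ / 2) * σz * nvec (θ / 2) = nvec θ := by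
  rw [← nvec_zero, nvec_mul_nvec_mul_nvec]
  ring_nf

lemma nvec_half_mul_nvec_mul (θ : ℝ) : nvec (θ / 2) * nvec θ * nvec (θ / 2) = σz := by
  rw [nvec_mul_nvec_mul_nvec, ← nvec_zero]
  ring_nf

lemma nvec_half_mul_UB_mul (θ β : ℝ) : nvec (θ / 2) * UB β * nvec (θ / 2) = UC β θ := by
  rw [UB, mul_exp_mul_of_mul_self_eq_one (nvec_mul_self _), Matrix.mul_smul, Matrix.smul_mul,
    nvec_half_mul_σz_mul, UC]

lemma nvec_half_mul_UC_mul (θ γ : ℝ) : nvec (θ / 2) * UC γ θ * nvec (θ / 2) = UB γ := by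
  rw [UC, mul_exp_mul_of_mul_self_eq_one (nvec_mul_self _), Matrix.mul_smul, Matrix.smul_mul,
    nvec_half_mul_nvec_mul, UB]

lemma transpose_Uqaoa (p : ℕ) (γ β : Fin p → ℝ) (θ : ℝ) :
    (Uqaoa p γ β θ)ᵀ =
      nvec (θ / 2) * Uqaoa p (fun k => β k.rev) (fun k => γ k.rev) θ * nvec (θ / 2) := by
  have hR := nvec_mul_self (θ / 2)
  rw [Uqaoa, Uqaoa, transpose_list_prod, List.map_reverse, List.reverse_reverse,
    mul_list_prod_mul_of_mul_self_eq_one hR, List.map_reverse, List.map_ofFn, List.map_ofFn,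
    ← List.ofFn_comp_rev]
  congr 2
  funext i
  simp only [Function.comp_apply, Fin.rev_rev, transpose_mul, transpose_UB, transpose_UC,
    mul_mul_mul_of_mul_self_eq_one hR, nvec_half_mul_UB_mul, nvec_half_mul_UC_mul]

lemma trace_nvec_mul_conj_σz_eq_of_transpose_eq {θ : ℝ} {U V : Matrix (Fin 2) (Fin 2) ℂ}
    (hU : Uᵀ = nvec (θ / 2) * V * nvec (θ / 2)) :
    trace (nvec θ * U * σz * Uᴴ) = trace (nvec θ * V * σz * Vᴴ) := by
  set R := nvec (θ / 2)
  have hUH : Uᴴᵀ = R * Vᴴ * R := by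
    rw [conjTranspose_transpose, ← transpose_conjTranspose, hU, conjTranspose_mul,
      conjTranspose_mul, conjTranspose_nvec, mul_assoc]
  calc trace (nvec θ * U * σz * Uᴴ) = trace (Uᴴᵀ * σz * Uᵀ * nvec θ) := by
        rw [← trace_transpose]; simp only [transpose_mul, transpose_σz, transpose_nvec, mul_assoc]
    _ = trace (R * (Vᴴ * R * σz * R * V * R * nvec θ)) := by rw [hU, hUH]; simp only [mul_assoc]
    _ = trace (Vᴴ * R * σz * R * V * R * nvec θ * R) := trace_mul_comm _ _
    _ = trace (Vᴴ * (R * σz * R) * V * (R * nvec θ * R)) := by simp only [mul_assoc]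
    _ = trace (nvec θ * V * σz * Vᴴ) := by
        rw [nvec_half_mul_σz_mul, nvec_half_mul_nvec_mul, mul_assoc, mul_assoc, trace_mul_comm]
        simp only [mul_assoc]

lemma Fps_eq_swap_rev (p : ℕ) (γ β : Fin p → ℝ) (θ : ℝ) :
    Fps p γ β θ = Fps p (fun k => β k.rev) (fun k => γ k.rev) θ := by
  rw [Fps, Fps, trace_nvec_mul_conj_σz_eq_of_transpose_eq (transpose_Uqaoa p γ β θ)]

theorem gradient_tangent_to_manifold_two_general
    (p : ℕ) (θ : ℝ) (γ β : Fin p → ℝ)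
    (h : ∀ i : Fin p, γ i = β (Fin.rev i)) (i : Fin p) :
    deriv (fun t => Fps p (Function.update γ i t) β θ) (γ i) -
      deriv (fun t => Fps p γ (Function.update β (Fin.rev i) t) θ) (β (Fin.rev i)) = 0 := by
  have hγ : (fun k => β k.rev) = γ := funext fun k => (h k).symm
  have hβ (t : ℝ) : (fun k => Function.update γ i t k.rev) = Function.update β i.rev t := by
    simpa [Function.comp_def, h] using Function.update_comp_equiv γ Fin.revPerm i t
  have hF : (fun t => Fps p (Function.update γ i t) β θ)
      = fun t => Fps p γ (Function.update β i.rev t) θ := by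
    funext t
    rw [Fps_eq_swap_rev, hγ, hβ]
  rw [hF, h i, sub_self]

/-- On the sub-manifold `γ_i − β_{p+1−i} = 0`, the gradient of the pseudospin expectation
is tangent to the sub-manifold: `∂F/∂γ_i − ∂F/∂β_{p+1−i} = 0` for every `i`. -/
theorem gradient_tangent_to_manifold_two
    (p : ℕ) (hp : 1 ≤ p) (θ : ℝ) (γ β : Fin p → ℝ)
    (h : ∀ i : Fin p, γ i = β (Fin.rev i)) (i : Fin p) :
    deriv (fun t => Fps p (Function.update γ i t) β θ) (γ i) -
      deriv (fun t => Fps p γ (Function.update β (Fin.rev i) t) θ) (β (Fin.rev i)) = 0 :=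
  gradient_tangent_to_manifold_two_general p θ γ β h i
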